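/- Let L : H → G be bounded linear, bounded below, with ‖L‖ ≤ 1, and let B be strictly positive on G. Then L ⊙_γ B → L* ▸ B in operator norm as γ → +∞, where L ⊙_γ B = (L ⊡_{1/γ} B⁻¹)⁻¹, with L ⊡_μ C = L* ∘ (C⁻¹ + μ(Id_G − L L*))⁻¹ ∘ L, is the resolvent composition, and L* ▸ B = (L* ∘ B⁻¹ ∘ L)⁻¹ is the parallel composition. -/

import Mathlib

open ContinuousLinearMap MeasureTheory

noncomputable section

variable {E : Type*} [NormedAddCommGroup E] [InnerProductSpace ℝ E] [CompleteSpace E]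
variable {H G : Type*} [NormedAddCommGroup H] [InnerProductSpace ℝ H] [CompleteSpace H]
  [NormedAddCommGroup G] [InnerProductSpace ℝ G] [CompleteSpace G]

/-- Löwner partial order: `A ≼ B` iff `B - A` is a positive operator. -/
def Loewner (A B : E →L[ℝ] E) : Prop := (B - A).IsPositive

/-- Strictly positive operators: `α • Id ≼ A` for some `α > 0`. -/
def StrictlyPos (A : E →L[ℝ] E) : Prop :=
  IsSelfAdjoint A ∧ ∃ α : ℝ, 0 < α ∧ Loewner (α • (1 : E →L[ℝ] E)) A

/-- Bounded below linear operator. -/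
def BoundedBelow (L : H →L[ℝ] G) : Prop := ∃ β : ℝ, 0 < β ∧ ∀ x : H, β * ‖x‖ ≤ ‖L x‖

/-- Resolvent cocomposition `L ⊡_γ B = L* ∘ (B⁻¹ + γ(Id − L L*))⁻¹ ∘ L`. -/
def rcc (L : H →L[ℝ] G) (γ : ℝ) (B : G →L[ℝ] G) : H →L[ℝ] H :=
  (adjoint L) ∘L (Ring.inverse (Ring.inverse B + γ • ((1 : G →L[ℝ] G) - L ∘L adjoint L))) ∘L L

/-- Resolvent composition `L ⊙_γ B = (L ⊡_{1/γ} B⁻¹)⁻¹`. -/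
def rc (L : H →L[ℝ] G) (γ : ℝ) (B : G →L[ℝ] G) : H →L[ℝ] H :=
  Ring.inverse (rcc L (1/γ) (Ring.inverse B))

/-- Parallel composition `L* ▸ B = (L* ∘ B⁻¹ ∘ L)⁻¹`. -/
def parallelComp (L : H →L[ℝ] G) (B : G →L[ℝ] G) : H →L[ℝ] H :=
  Ring.inverse ((adjoint L) ∘L (Ring.inverse B) ∘L L)

/-- `g(A,B) = inf {λ > 0 : A ≼ λ B}`. -/
def gThomp (A B : E →L[ℝ] E) : ℝ := sInf {l : ℝ | 0 < l ∧ Loewner A (l • B)}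

/-- Thompson metric. -/
def dThomp (A B : E →L[ℝ] E) : ℝ := Real.log (max (gThomp A B) (gThomp B A))

/-- The (unique) positive square root of a positive operator. -/
def opSqrt (A : E →L[ℝ] E) : E →L[ℝ] E :=
  letI := Classical.propDecidable
  if h : ∃ S : E →L[ℝ] E, S.IsPositive ∧ S * S = A then h.choose else 0

/-- Real power `A^t` of a strictly positive operator, `t ∈ (0,1)`, via the
Balakrishnan integral formula `A^t = (sin (π t)/π) ∫₀^∞ s^{t-1} A (A + s)⁻¹ ds`. -/
def opRpow (A : E →L[ℝ] E) (t : ℝ) : E →L[ℝ] E :=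
  (Real.sin (Real.pi * t) / Real.pi) •
    ∫ s in Set.Ioi (0 : ℝ), s ^ (t - 1) • (A * Ring.inverse (A + s • (1 : E →L[ℝ] E)))

/-- Geometric mean `A # B = A^{1/2} (A^{-1/2} B A^{-1/2})^{1/2} A^{1/2}`. -/
def geomMean (A B : E →L[ℝ] E) : E →L[ℝ] E :=
  opSqrt A * opSqrt (Ring.inverse (opSqrt A) * B * Ring.inverse (opSqrt A)) * opSqrt A

/-- `t`-weighted geometric mean `A #_t B = A^{1/2} (A^{-1/2} B A^{-1/2})^t A^{1/2}`. -/
def wGeomMean (t : ℝ) (A B : E →L[ℝ] E) : E →L[ℝ] E :=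
  opSqrt A * opRpow (Ring.inverse (opSqrt A) * B * Ring.inverse (opSqrt A)) t * opSqrt A

local notation "⟪" x ", " y "⟫" => @inner ℝ _ _ x y


/-- A self-adjoint coercive operator is bounded below in norm. -/
lemma norm_le_of_coercive {A : E →L[ℝ] E} {α : ℝ} (hα : 0 < α)
    (h : ∀ x : E, α * ‖x‖ ^ 2 ≤ ⟪A x, x⟫) (x : E) : α * ‖x‖ ≤ ‖A x‖ := by
  rcases eq_or_ne x 0 with rfl | hx
  · simp
  · have h1 : α * ‖x‖ ^ 2 ≤ ‖A x‖ * ‖x‖ := (h x).trans (real_inner_le_norm _ _)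
    have hx' : 0 < ‖x‖ := norm_pos_iff.mpr hx
    nlinarith

/-- A self-adjoint coercive operator is invertible. -/
lemma isUnit_of_coercive {A : E →L[ℝ] E} (hA : IsSelfAdjoint A) {α : ℝ} (hα : 0 < α)
    (h : ∀ x : E, α * ‖x‖ ^ 2 ≤ ⟪A x, x⟫) : IsUnit A := by
  have hbelow := norm_le_of_coercive hα h
  have hinj : Function.Injective A := by
    intro x y hxy
    have h0 : A (x - y) = 0 := by rw [map_sub, hxy, sub_self]
    have h1 := hbelow (x - y)
    rw [h0, norm_zero] at h1
    have h2 : ‖x - y‖ ≤ 0 := by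
      by_contra hcon
      push_neg at hcon
      nlinarith
    have : x - y = 0 := norm_le_zero_iff.mp h2
    exact sub_eq_zero.mp this
  have hker : A.ker = ⊥ := LinearMap.ker_eq_bot.mpr hinj
  have hanti : AntilipschitzWith (Real.toNNReal α)⁻¹ A := by
    apply A.antilipschitz_of_bound
    intro x
    rw [NNReal.coe_inv, Real.coe_toNNReal _ hα.le, ← div_eq_inv_mul, le_div_iff₀ hα]
    calc ‖x‖ * α = α * ‖x‖ := mul_comm _ _
      _ ≤ ‖A x‖ := hbelow x
  have hclosed : IsClosed (Set.range A) := hanti.isClosed_range A.uniformContinuous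
  have hclosed' : IsClosed ((A.range : Submodule ℝ E) : Set E) := by
    rw [LinearMap.coe_range]; exact hclosed
  haveI : CompleteSpace (A.range : Submodule ℝ E) := hclosed'.completeSpace_coe
  have horth : (A.range)ᗮ = ⊥ := by
    rw [Submodule.eq_bot_iff]
    intro x hx
    have hx' : ∀ y : E, ⟪A y, x⟫ = 0 := fun y =>
      (Submodule.mem_orthogonal _ x).mp hx (A y) (LinearMap.mem_range_self _ y)
    have hAx : A x = 0 := by
      have := hx' x
      rw [real_inner_comm, ← ContinuousLinearMap.adjoint_inner_left, hA.adjoint_eq] at this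
      have h3 : (0:ℝ) < α * ‖x‖ ^ 2 ∨ x = 0 := by
        rcases eq_or_ne x 0 with rfl | hxne
        · exact Or.inr rfl
        · exact Or.inl (by have := norm_pos_iff.mpr hxne; positivity)
      rcases h3 with h3 | rfl
      · exact absurd (lt_of_lt_of_le h3 ((h x).trans_eq this)) (lt_irrefl 0)
      · simp
    have := hbelow x
    rw [hAx, norm_zero] at this
    have h2 : ‖x‖ ≤ 0 := by nlinarith
    exact norm_le_zero_iff.mp h2
  have hrange : A.range = ⊤ := Submodule.orthogonal_eq_bot_iff.mp horth
  let e := ContinuousLinearEquiv.ofBijective A hker hrange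
  have hecoe : ∀ x, e x = A x := fun x => rfl
  refine ⟨⟨A, (e.symm : E →L[ℝ] E), ?_, ?_⟩, rfl⟩
  · ext x
    show A ((e.symm : E →L[ℝ] E) x) = x
    exact e.apply_symm_apply x
  · ext x
    show (e.symm : E →L[ℝ] E) (A x) = x
    exact e.symm_apply_apply x

lemma coercive_of_strictlyPos {B : E →L[ℝ] E} (hB : StrictlyPos B) :
    ∃ α : ℝ, 0 < α ∧ ∀ x : E, α * ‖x‖ ^ 2 ≤ ⟪B x, x⟫ := by
  obtain ⟨-, α, hα, hpos⟩ := hB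
  refine ⟨α, hα, fun x => ?_⟩
  have h0 := hpos.2 x
  have h1 : ContinuousLinearMap.reApplyInnerSelf (B - α • (1 : E →L[ℝ] E)) x
      = ⟪B x, x⟫ - α * ‖x‖ ^ 2 := by
    simp only [ContinuousLinearMap.reApplyInnerSelf, ContinuousLinearMap.sub_apply,
      ContinuousLinearMap.smul_apply, ContinuousLinearMap.one_apply, inner_sub_left,
      real_inner_smul_left, RCLike.re_to_real]
    rw [real_inner_self_eq_norm_sq]
  rw [h1] at h0
  linarith

theorem rc_tendsto_parallel (L : H →L[ℝ] G) (hL : BoundedBelow L) (hL1 : ‖L‖ ≤ 1)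
    (B : G →L[ℝ] G) (hB : StrictlyPos B) :
    Filter.Tendsto (fun γ : ℝ => rc L γ B) Filter.atTop (nhds (parallelComp L B)) := by
  obtain ⟨β, hβ, hLb⟩ := hL
  obtain ⟨α, hα, hcoB⟩ := coercive_of_strictlyPos hB
  have hBsa : IsSelfAdjoint B := hB.1
  have hBU : IsUnit B := isUnit_of_coercive hBsa hα hcoB
  obtain ⟨u, hu⟩ := hBU
  set Binv : G →L[ℝ] G := Ring.inverse B with hBinvdef
  have hBinvu : Binv = ((u⁻¹ : (G →L[ℝ] G)ˣ) : G →L[ℝ] G) := by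
    rw [hBinvdef, ← hu, Ring.inverse_unit]
  have hinvinv : Ring.inverse Binv = B := by
    rw [hBinvu, Ring.inverse_unit, inv_inv, hu]
  have hmulinv : ∀ y : G, B (Binv y) = y := by
    intro y
    have h1 : B * Binv = 1 := by
      rw [hBinvu, ← hu]; exact u.mul_inv
    calc B (Binv y) = (B * Binv) y := rfl
      _ = y := by rw [h1]; rfl
  -- self-adjointness of Binv
  have hBinvsa : IsSelfAdjoint Binv := by
    rw [IsSelfAdjoint, hBinvdef, ← Ring.inverse_star, hBsa]
  -- coercivity of Binv
  have hBnorm : (0:ℝ) < ‖B‖ + 1 := by positivity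
  have hcoBinv : ∀ y : G, α / (‖B‖ + 1) ^ 2 * ‖y‖ ^ 2 ≤ ⟪Binv y, y⟫ := by
    intro y
    set z := Binv y with hz
    have hBz : B z = y := hmulinv y
    have h1 : α * ‖z‖ ^ 2 ≤ ⟪B z, z⟫ := hcoB z
    have h2 : ⟪Binv y, y⟫ = ⟪B z, z⟫ := by
      have : ⟪Binv y, y⟫ = ⟪z, B z⟫ := by rw [hBz]
      rw [this]; exact real_inner_comm _ _
    have h3 : ‖y‖ ≤ (‖B‖ + 1) * ‖z‖ := by
      calc ‖y‖ = ‖B z‖ := by rw [hBz]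
        _ ≤ ‖B‖ * ‖z‖ := B.le_opNorm z
        _ ≤ (‖B‖ + 1) * ‖z‖ := by nlinarith [norm_nonneg z]
    rw [h2, div_mul_eq_mul_div, div_le_iff₀ (by positivity)]
    have h4 : ‖y‖ * ‖y‖ ≤ ((‖B‖ + 1) * ‖z‖) * ((‖B‖ + 1) * ‖z‖) :=
      mul_le_mul h3 h3 (norm_nonneg y) (by positivity)
    have h5 : α * ‖y‖ ^ 2 ≤ (α * ‖z‖ ^ 2) * (‖B‖ + 1) ^ 2 := by nlinarith
    have h6 : (α * ‖z‖ ^ 2) * (‖B‖ + 1) ^ 2 ≤ ⟪B z, z⟫ * (‖B‖ + 1) ^ 2 := by nlinarith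
    linarith
  -- the middle operator
  set M : H →L[ℝ] H := (adjoint L) ∘L Binv ∘L L with hM
  have hMapp : ∀ x : H, ⟪M x, x⟫ = ⟪Binv (L x), L x⟫ := by
    intro x
    rw [hM]
    simp only [ContinuousLinearMap.comp_apply]
    rw [ContinuousLinearMap.adjoint_inner_left]
  have hcoM : ∀ x : H, (α / (‖B‖ + 1) ^ 2 * β ^ 2) * ‖x‖ ^ 2 ≤ ⟪M x, x⟫ := by
    intro x
    rw [hMapp]
    have h1 := hcoBinv (L x)
    have h2 := hLb x
    have hc : (0:ℝ) ≤ α / (‖B‖ + 1) ^ 2 := by positivity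
    have h3 : (β * ‖x‖) * (β * ‖x‖) ≤ ‖L x‖ * ‖L x‖ :=
      mul_le_mul h2 h2 (by positivity) (norm_nonneg _)
    have h4 := mul_le_mul_of_nonneg_left h3 hc
    nlinarith [h1, h4]
  have hMsa : IsSelfAdjoint M := by
    rw [IsSelfAdjoint, ContinuousLinearMap.star_eq_adjoint, hM,
      ContinuousLinearMap.adjoint_comp, ContinuousLinearMap.adjoint_comp,
      ContinuousLinearMap.adjoint_adjoint, hBinvsa.adjoint_eq]
    rfl
  have hMc : (0:ℝ) < α / (‖B‖ + 1) ^ 2 * β ^ 2 := by positivity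
  have hMU : IsUnit M := isUnit_of_coercive hMsa hMc hcoM
  obtain ⟨v, hv⟩ := hMU
  -- rewrite rc
  set T : G →L[ℝ] G := (1 : G →L[ℝ] G) - L ∘L adjoint L with hT
  have hrc : ∀ γ : ℝ, rc L γ B =
      Ring.inverse ((adjoint L) ∘L (Ring.inverse (B + (1/γ) • T)) ∘L L) := by
    intro γ
    rw [rc, rcc, ← hBinvdef, hinvinv, ← hT]
  -- convergence
  have h1 : Filter.Tendsto (fun γ : ℝ => B + (1/γ) • T) Filter.atTop (nhds B) := by
    have h0 : Filter.Tendsto (fun γ : ℝ => (1/γ) • T) Filter.atTop (nhds ((0:ℝ) • T)) := by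
      apply Filter.Tendsto.smul_const
      exact tendsto_inv_atTop_zero.congr fun γ => (one_div γ).symm
    rw [zero_smul] at h0
    have := Filter.Tendsto.add (tendsto_const_nhds (x := B) (f := Filter.atTop)) h0
    simpa using this
  have h2 : Filter.Tendsto (fun γ : ℝ => Ring.inverse (B + (1/γ) • T)) Filter.atTop
      (nhds Binv) := by
    have hc : ContinuousAt Ring.inverse B := by
      rw [← hu]; exact NormedRing.inverse_continuousAt u
    exact Filter.Tendsto.comp hc h1
  have hcont : Continuous fun X : G →L[ℝ] G => (adjoint L) ∘L X ∘L L := by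
    exact continuous_const.clm_comp (continuous_id.clm_comp continuous_const)
  have h3 : Filter.Tendsto (fun γ : ℝ => (adjoint L) ∘L (Ring.inverse (B + (1/γ) • T)) ∘L L)
      Filter.atTop (nhds M) := by
    rw [hM]
    exact (hcont.tendsto Binv).comp h2
  have h4 : ContinuousAt Ring.inverse M := by
    rw [← hv]; exact NormedRing.inverse_continuousAt v
  have h5 := Filter.Tendsto.comp h4 h3
  have hpar : parallelComp L B = Ring.inverse M := by rw [parallelComp, hM, hBinvdef]
  rw [hpar]
  refine h5.congr fun γ => ?_
  rw [Function.comp_apply, ← hrc]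

end
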